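/- arXiv:1202.1377 — 3 statements merged into one kernel-verified Lean document; each statement's English description precedes it below -/
import Mathlib

section
/- For the Ridge regression estimator β̂ = β̂(λ) with regularization parameter λ > 0, assuming condition (minvar), the estimation bias satisfies max_{1≤j≤p} |E[β̂_j] − θ⁰_j| ≤ λ ‖θ⁰‖₂ λ_min≠0(Σ̂)⁻¹. -/
/-!
Since `E[ε] = 0`, `E[β̂] = (Σ̂ + λI)⁻¹ Σ̂ β⁰ = (Σ̂ + λI)⁻¹ Σ̂ θ⁰` (`Xθ⁰ = Xβ⁰`), so the bias is
`-λ w` with `w = (Σ̂ + λI)⁻¹ θ⁰`. As `θ⁰` lies in the row space of `X`, it is orthogonal to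
`ker Σ̂ = ker X`, and then so is `w = λ⁻¹ (θ⁰ - Σ̂ w)`. On that orthogonal complement `Σ̂` is
bounded below by `λ_min≠0(Σ̂)`, whence
`λ_min≠0 ‖w‖² ≤ ⟪w, Σ̂ w⟫ + λ ‖w‖² = ⟪w, θ⁰⟫ ≤ ‖w‖ ‖θ⁰‖`, and `|w_j| ≤ ‖w‖ ≤ ‖θ⁰‖ / λ_min≠0`.
-/

open MeasureTheory ProbabilityTheory Filter Matrix

noncomputable section

namespace PaperRidge

/-- Euclidean (ℓ₂) norm of a vector in `ℝᵖ`. -/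
def l2norm {p : ℕ} (v : Fin p → ℝ) : ℝ := Real.sqrt (∑ j, v j ^ 2)

/-- `Σ̂ = n⁻¹ Xᵀ X`. -/
def Sigmahat (n : ℕ) {p : ℕ} (X : Matrix (Fin n) (Fin p) ℝ) : Matrix (Fin p) (Fin p) ℝ :=
  ((n : ℝ))⁻¹ • (Xᵀ * X)

/-- `Ω(λ) = (Σ̂ + λ I)⁻¹ Σ̂ (Σ̂ + λ I)⁻¹`. -/
def OmegaM (n : ℕ) {p : ℕ} (X : Matrix (Fin n) (Fin p) ℝ) (lam : ℝ) :
    Matrix (Fin p) (Fin p) ℝ :=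
  (Sigmahat n X + lam • (1 : Matrix (Fin p) (Fin p) ℝ))⁻¹ * Sigmahat n X *
    (Sigmahat n X + lam • (1 : Matrix (Fin p) (Fin p) ℝ))⁻¹

/-- `Ω_min(λ) = min_j Ω(λ)_jj`. -/
def OmegaMin (n : ℕ) {p : ℕ} (X : Matrix (Fin n) (Fin p) ℝ) (lam : ℝ) : ℝ :=
  ⨅ j : Fin p, OmegaM n X lam j j

/-- The Ridge estimator `β̂(λ) = (Σ̂ + λ I)⁻¹ n⁻¹ Xᵀ Y`. -/
def ridge (n : ℕ) {p : ℕ} (X : Matrix (Fin n) (Fin p) ℝ) (lam : ℝ) (Y : Fin n → ℝ) :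
    Fin p → ℝ :=
  ((Sigmahat n X + lam • (1 : Matrix (Fin p) (Fin p) ℝ))⁻¹ *
    (((n : ℝ))⁻¹ • Xᵀ)).mulVec Y

/-- The row space `R(X) ⊆ ℝᵖ` of the design matrix `X`. -/
def rowSpace (n : ℕ) {p : ℕ} (X : Matrix (Fin n) (Fin p) ℝ) : Submodule ℝ (Fin p → ℝ) :=
  Submodule.span ℝ (Set.range fun i => X i)

/-- `P` is the matrix of the orthogonal projection of `ℝᵖ` onto the row space of `X`
(w.r.t. the standard inner product), i.e. `P = Xᵀ (X Xᵀ)⁻ X`. -/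
def IsRowProjection (n : ℕ) {p : ℕ} (X : Matrix (Fin n) (Fin p) ℝ)
    (P : Matrix (Fin p) (Fin p) ℝ) : Prop :=
  Pᵀ = P ∧ P * P = P ∧ (∀ v, P.mulVec v ∈ rowSpace n X) ∧
    ∀ v ∈ rowSpace n X, P.mulVec v = v

/-- `t = λ_min≠0(A)`, the smallest nonzero eigenvalue of `A`. -/
def IsSmallestNonzeroEigenvalue {p : ℕ} (A : Matrix (Fin p) (Fin p) ℝ) (t : ℝ) : Prop :=
  t ≠ 0 ∧ (∃ v, v ≠ 0 ∧ A.mulVec v = t • v) ∧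
    ∀ s : ℝ, s ≠ 0 → (∃ v, v ≠ 0 ∧ A.mulVec v = s • v) → t ≤ s

/-- The random vector `Z : Ω → ℝᵖ` has the multivariate Gaussian distribution
`N_p(mv, C)` under `μ` (characterized through all one-dimensional projections). -/
def IsGaussianVec {Ω : Type*} [MeasurableSpace Ω] (μ : Measure Ω) {p : ℕ}
    (Z : Ω → Fin p → ℝ) (mv : Fin p → ℝ) (C : Matrix (Fin p) (Fin p) ℝ) : Prop :=
  ∀ u : Fin p → ℝ,
    Measure.map (fun ω => ∑ j, u j * Z ω j) μ =
      gaussianReal (∑ j, u j * mv j)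
        (Real.toNNReal (∑ j, ∑ k, u j * C j k * u k))

/-- The normalizing factors `a_{n,p;j}(σ) = n^{1/2} σ⁻¹ Ω(λ)_jj^{-1/2}`. -/
def anp (n : ℕ) {p : ℕ} (X : Matrix (Fin n) (Fin p) ℝ) (lam σ : ℝ) (j : Fin p) : ℝ :=
  Real.sqrt (n : ℝ) * σ⁻¹ * (Real.sqrt (OmegaM n X lam j j))⁻¹

/-- The bias-corrected Ridge estimator
`β̂_corr;j = β̂_j - ∑_{k ≠ j} (P_X)_{jk} β̂_init;k`. -/
def corrRidge (n : ℕ) {p : ℕ} (X : Matrix (Fin n) (Fin p) ℝ) (lam : ℝ)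
    (P : Matrix (Fin p) (Fin p) ℝ) (Y : Fin n → ℝ) (binit : Fin p → ℝ) (j : Fin p) : ℝ :=
  ridge n X lam Y j - ∑ k ∈ Finset.univ.erase j, P j k * binit k

/-- The standard normal cumulative distribution function `Φ`. -/
def Phi (x : ℝ) : ℝ := ((gaussianReal 0 1) (Set.Iic x)).toReal

/-- The p-value `P_j = 2 (1 - Φ((a_j |β̂_corr;j| - Δ_j)₊))`. -/
def pvalOf (aj Δj bc : ℝ) : ℝ := 2 * (1 - Phi (max (aj * |bc| - Δj) 0))

/-- `max_{k ≠ j} f k`. -/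
def maxOff {p : ℕ} (f : Fin p → ℝ) (j : Fin p) : ℝ :=
  ⨆ k : {k : Fin p // k ≠ j}, f k

/-- The distribution function `F_Z(c) = P[min_j 2 (1 - Φ(a_j |Z_j|)) ≤ c]`. -/
def FZdist {Ω' : Type*} [MeasurableSpace Ω'] (ν : Measure Ω') {p : ℕ}
    (a : Fin p → ℝ) (Z : Ω' → Fin p → ℝ) (c : ℝ) : ℝ :=
  (ν {ω' | (⨅ j, 2 * (1 - Phi (a j * |Z ω' j|))) ≤ c}).toReal

/-- A generalized inverse `F_Z^{-1}(α)`. -/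
def FZinv {Ω' : Type*} [MeasurableSpace Ω'] (ν : Measure Ω') {p : ℕ}
    (a : Fin p → ℝ) (Z : Ω' → Fin p → ℝ) (α : ℝ) : ℝ :=
  sInf {c : ℝ | α ≤ FZdist ν a Z c}

/-- `J_G(c) = P[max_{j ∈ G} (a_j |Z_j| + Δ_j) ≤ c]`. -/
def JG {Ω' : Type*} [MeasurableSpace Ω'] (ν : Measure Ω') {p : ℕ}
    (a Δ : Fin p → ℝ) (Z : Ω' → Fin p → ℝ) (G : Finset (Fin p)) (hG : G.Nonempty)
    (c : ℝ) : ℝ :=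
  (ν {ω' | G.sup' hG (fun j => a j * |Z ω' j| + Δ j) ≤ c}).toReal

end PaperRidge

namespace Matrix.IsHermitian

variable {ι : Type*} [Fintype ι] [DecidableEq ι] {S : Matrix ι ι ℝ}

omit [DecidableEq ι] in
lemma mulVec_dotProduct (hS : S.IsHermitian) (v w : ι → ℝ) :
    (S *ᵥ v) ⬝ᵥ w = v ⬝ᵥ (S *ᵥ w) := by
  rw [dotProduct_mulVec, ← mulVec_transpose, ← conjTranspose_eq_transpose_of_trivial, hS.eq,
    dotProduct_comm]

/-- In an orthonormal eigenbasis of `S`, `w` has no component along the eigenvalue `0`, and every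
other eigenvalue is at least `l`. -/
lemma mul_dotProduct_self_le_dotProduct_mulVec (hS : S.IsHermitian) {l : ℝ} {w : ι → ℝ}
    (hl : ∀ i, hS.eigenvalues i ≠ 0 → l ≤ hS.eigenvalues i)
    (hw : ∀ v, S *ᵥ v = 0 → w ⬝ᵥ v = 0) :
    l * (w ⬝ᵥ w) ≤ w ⬝ᵥ (S *ᵥ w) := by
  set b := hS.eigenvectorBasis
  set c : ι → ℝ := fun i => w ⬝ᵥ ⇑(b i)
  have hparseval (v : ι → ℝ) : w ⬝ᵥ v = ∑ i, c i * (v ⬝ᵥ ⇑(b i)) := by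
    simpa [c, EuclideanSpace.inner_eq_star_dotProduct, dotProduct_comm] using
      (b.sum_inner_mul_inner (WithLp.toLp 2 w) (WithLp.toLp 2 v)).symm
  have hcoord (i : ι) : (S *ᵥ w) ⬝ᵥ ⇑(b i) = hS.eigenvalues i * c i := by
    rw [hS.mulVec_dotProduct, hS.mulVec_eigenvectorBasis, dotProduct_smul, smul_eq_mul]
  rw [hparseval, hparseval, Finset.mul_sum]
  refine Finset.sum_le_sum fun i _ => ?_
  rw [hcoord]
  by_cases hd : hS.eigenvalues i = 0
  · have hc : c i = 0 := hw _ (by rw [hS.mulVec_eigenvectorBasis, hd, zero_smul])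
    simp [hc]
  · nlinarith [hl i hd, mul_self_nonneg (c i)]

lemma mul_norm_le_norm_of_mulVec_add_smul_eq (hS : S.IsHermitian) {l lam : ℝ} {w θ : ι → ℝ}
    (hl : ∀ i, hS.eigenvalues i ≠ 0 → l ≤ hS.eigenvalues i) (hlam : 0 < lam)
    (hθ : ∀ v, S *ᵥ v = 0 → θ ⬝ᵥ v = 0) (hw : S *ᵥ w + lam • w = θ) :
    l * ‖WithLp.toLp 2 w‖ ≤ ‖WithLp.toLp 2 θ‖ := by
  have hθw (v : ι → ℝ) : v ⬝ᵥ θ = v ⬝ᵥ (S *ᵥ w) + lam * (v ⬝ᵥ w) := by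
    rw [← hw, dotProduct_add, dotProduct_smul, smul_eq_mul]
  have hwker (v : ι → ℝ) (hv : S *ᵥ v = 0) : w ⬝ᵥ v = 0 := by
    have h := hθw v
    rw [dotProduct_comm, hθ v hv, ← hS.mulVec_dotProduct, hv, zero_dotProduct, zero_add,
      dotProduct_comm] at h
    exact (mul_eq_zero.1 h.symm).resolve_left hlam.ne'
  have hnorm_sq (v : ι → ℝ) : ‖WithLp.toLp 2 v‖ ^ 2 = v ⬝ᵥ v := by
    rw [← real_inner_self_eq_norm_sq, EuclideanSpace.inner_toLp_toLp, star_trivial]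
  have hCS : w ⬝ᵥ θ ≤ ‖WithLp.toLp 2 w‖ * ‖WithLp.toLp 2 θ‖ := by
    simpa [EuclideanSpace.inner_toLp_toLp, dotProduct_comm] using
      real_inner_le_norm (WithLp.toLp 2 w) (WithLp.toLp 2 θ)
  have hquad := hS.mul_dotProduct_self_le_dotProduct_mulVec hl hwker
  have hsq : l * ‖WithLp.toLp 2 w‖ ^ 2 ≤ ‖WithLp.toLp 2 w‖ * ‖WithLp.toLp 2 θ‖ := by
    rw [hnorm_sq]
    nlinarith [hθw w, hnorm_sq w, sq_nonneg ‖WithLp.toLp 2 w‖]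
  rcases (norm_nonneg (WithLp.toLp 2 w)).eq_or_lt with h0 | hpos
  · rw [← h0, mul_zero]
    exact norm_nonneg _
  · nlinarith

end Matrix.IsHermitian

namespace PaperRidge

lemma l2norm_eq_norm {p : ℕ} (v : Fin p → ℝ) : l2norm v = ‖WithLp.toLp 2 v‖ := by
  simp [l2norm, EuclideanSpace.norm_eq]

lemma IsGaussianVec.hasLaw {Ω : Type*} [MeasurableSpace Ω] {μ : Measure Ω} {p : ℕ}
    {Z : Ω → Fin p → ℝ} {m : Fin p → ℝ} {C : Matrix (Fin p) (Fin p) ℝ}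
    (hZ : IsGaussianVec μ Z m C) (u : Fin p → ℝ) :
    HasLaw (fun ω => ∑ j, u j * Z ω j)
      (gaussianReal (∑ j, u j * m j) (Real.toNNReal (∑ j, ∑ k, u j * C j k * u k))) μ :=
  ⟨.of_map_ne_zero (by rw [hZ u]; exact IsProbabilityMeasure.ne_zero _), hZ u⟩

lemma IsGaussianVec.integral_mulVec_add {Ω : Type*} [MeasurableSpace Ω] {μ : Measure Ω}
    {p q : ℕ} {Z : Ω → Fin p → ℝ} {m : Fin p → ℝ} {C : Matrix (Fin p) (Fin p) ℝ}
    (hZ : IsGaussianVec μ Z m C) (M : Matrix (Fin q) (Fin p) ℝ) (y : Fin p → ℝ) (i : Fin q) :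
    ∫ ω, (M *ᵥ (y + Z ω)) i ∂μ = (M *ᵥ (y + m)) i := by
  have hlaw := gaussianReal_add_const (hZ.hasLaw (M i)) ((M *ᵥ y) i)
  have hexpand (z : Fin p → ℝ) : (M *ᵥ (y + z)) i = ∑ j, M i j * z j + (M *ᵥ y) i := by
    simp [mulVec, dotProduct, mul_add, Finset.sum_add_distrib, add_comm]
  simp_rw [hexpand]
  rw [hlaw.integral_eq, integral_id_gaussianReal]

section Design

variable {n p : ℕ} (X : Matrix (Fin n) (Fin p) ℝ)

lemma posSemidef_Sigmahat : (Sigmahat n X).PosSemidef := by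
  rw [Sigmahat, ← conjTranspose_eq_transpose_of_trivial]
  exact (posSemidef_conjTranspose_mul_self X).smul (by positivity)

lemma Sigmahat_mulVec (v : Fin p → ℝ) :
    Sigmahat n X *ᵥ v = (n : ℝ)⁻¹ • (Xᵀ *ᵥ (X *ᵥ v)) := by
  rw [Sigmahat, smul_mulVec, mulVec_mulVec]

lemma mulVec_eq_zero_of_Sigmahat_mulVec_eq_zero {v : Fin p → ℝ}
    (hv : Sigmahat n X *ᵥ v = 0) : X *ᵥ v = 0 := by
  rcases n.eq_zero_or_pos with rfl | hn
  · exact Subsingleton.elim _ _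
  rw [Sigmahat, smul_mulVec, smul_eq_zero_iff_right (by positivity),
    ← conjTranspose_eq_transpose_of_trivial, conjTranspose_mul_self_mulVec_eq_zero] at hv
  exact hv

lemma dotProduct_eq_zero_of_mem_rowSpace {θ v : Fin p → ℝ} (hθ : θ ∈ rowSpace n X)
    (hv : X *ᵥ v = 0) : θ ⬝ᵥ v = 0 := by
  induction hθ using Submodule.span_induction with
  | mem u hu =>
    obtain ⟨i, rfl⟩ := hu
    exact congrFun hv i
  | zero => exact zero_dotProduct v
  | add u u' _ _ hu hu' => rw [add_dotProduct, hu, hu', add_zero]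
  | smul a u _ hu => rw [smul_dotProduct, hu, smul_zero]

lemma IsRowProjection.mulVec_mulVec {P : Matrix (Fin p) (Fin p) ℝ} (hP : IsRowProjection n X P)
    (v : Fin p → ℝ) : X *ᵥ (P *ᵥ v) = X *ᵥ v := by
  funext i
  change X i ⬝ᵥ (P *ᵥ v) = X i ⬝ᵥ v
  rw [dotProduct_mulVec, ← mulVec_transpose, hP.1,
    hP.2.2.2 (X i) (Submodule.subset_span ⟨i, rfl⟩)]

lemma isUnit_det_Sigmahat_add_smul_one {lam : ℝ} (hlam : 0 < lam) :
    IsUnit (Sigmahat n X + lam • 1).det :=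
  (isUnit_iff_isUnit_det _).1
    (PosDef.posSemidef_add (posSemidef_Sigmahat X) (PosDef.one.smul hlam)).isUnit

lemma ridge_mulVec (lam : ℝ) (β : Fin p → ℝ) :
    ridge n X lam (X *ᵥ β) = (Sigmahat n X + lam • 1)⁻¹ *ᵥ (Sigmahat n X *ᵥ β) := by
  rw [ridge, ← mulVec_mulVec, Sigmahat_mulVec, smul_mulVec]

lemma ridge_mulVec_sub_projection {lam : ℝ} (hlam : 0 < lam) {P : Matrix (Fin p) (Fin p) ℝ}
    (hP : IsRowProjection n X P) (β : Fin p → ℝ) :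
    ridge n X lam (X *ᵥ β) - P *ᵥ β = -(lam • ((Sigmahat n X + lam • 1)⁻¹ *ᵥ (P *ᵥ β))) := by
  set A := Sigmahat n X + lam • 1
  have hSβ : Sigmahat n X *ᵥ β = A *ᵥ (P *ᵥ β) - lam • (P *ᵥ β) := by
    rw [Sigmahat_mulVec, ← hP.mulVec_mulVec, ← Sigmahat_mulVec, add_mulVec, smul_mulVec,
      one_mulVec, add_sub_cancel_right]
  rw [ridge_mulVec, hSβ, mulVec_sub, mulVec_mulVec,
    nonsing_inv_mul _ (isUnit_det_Sigmahat_add_smul_one X hlam), one_mulVec, mulVec_smul]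
  abel

end Design

lemma IsSmallestNonzeroEigenvalue.pos {p : ℕ} {S : Matrix (Fin p) (Fin p) ℝ} {t : ℝ}
    (ht : IsSmallestNonzeroEigenvalue S t) (hS : S.PosSemidef) : 0 < t := by
  obtain ⟨ht0, ⟨v, hv0, hv⟩, -⟩ := ht
  have hnonneg := hS.dotProduct_mulVec_nonneg v
  rw [hv, dotProduct_smul, smul_eq_mul, star_trivial] at hnonneg
  have hvv : 0 < v ⬝ᵥ v := by simpa using dotProduct_star_self_pos_iff.2 hv0
  exact lt_of_le_of_ne (nonneg_of_mul_nonneg_left hnonneg hvv) (Ne.symm ht0)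

lemma IsSmallestNonzeroEigenvalue.le_eigenvalues {p : ℕ} {S : Matrix (Fin p) (Fin p) ℝ} {t : ℝ}
    (ht : IsSmallestNonzeroEigenvalue S t) (hS : S.IsHermitian) (i : Fin p)
    (hi : hS.eigenvalues i ≠ 0) : t ≤ hS.eigenvalues i :=
  ht.2.2 _ hi ⟨_, fun h => hS.eigenvectorBasis.orthonormal.ne_zero i
    (WithLp.ofLp_injective (p := 2) h), hS.mulVec_eigenvectorBasis i⟩

theorem ridge_bias_bound_general
    {Ω : Type*} [MeasurableSpace Ω] (μ : Measure Ω)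
    (n p : ℕ)
    (X : Matrix (Fin n) (Fin p) ℝ) (β0 : Fin p → ℝ)
    (σ : ℝ)
    (ε : Ω → Fin n → ℝ)
    (hε : IsGaussianVec μ ε 0 (σ ^ 2 • (1 : Matrix (Fin n) (Fin n) ℝ)))
    (lam : ℝ) (hlam : 0 < lam)
    (PX : Matrix (Fin p) (Fin p) ℝ) (hPX : IsRowProjection n X PX)
    (lmin : ℝ) (hlmin : IsSmallestNonzeroEigenvalue (Sigmahat n X) lmin) :
    ∀ j : Fin p,
      |(∫ ω, ridge n X lam (X.mulVec β0 + ε ω) j ∂μ) - PX.mulVec β0 j| ≤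
        lam * l2norm (PX.mulVec β0) * lmin⁻¹ := by
  intro j
  set S := Sigmahat n X
  set θ := PX *ᵥ β0
  set w := (S + lam • 1)⁻¹ *ᵥ θ
  have hS : S.IsHermitian := (posSemidef_Sigmahat X).isHermitian
  have hmean : ∫ ω, ridge n X lam (X *ᵥ β0 + ε ω) j ∂μ = ridge n X lam (X *ᵥ β0) j := by
    simpa only [ridge, add_zero] using hε.integral_mulVec_add _ (X *ᵥ β0) j
  have hbias : ridge n X lam (X *ᵥ β0) j - θ j = -(lam * w j) := by
    simpa only [Pi.sub_apply, Pi.neg_apply, Pi.smul_apply, smul_eq_mul] using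
      congrFun (ridge_mulVec_sub_projection X hlam hPX β0) j
  have hw : S *ᵥ w + lam • w = θ := by
    calc S *ᵥ w + lam • w = (S + lam • 1) *ᵥ w := by rw [add_mulVec, smul_mulVec, one_mulVec]
      _ = θ := by
        rw [mulVec_mulVec, mul_nonsing_inv _ (isUnit_det_Sigmahat_add_smul_one X hlam),
          one_mulVec]
  have hθ (v : Fin p → ℝ) (hv : S *ᵥ v = 0) : θ ⬝ᵥ v = 0 :=
    dotProduct_eq_zero_of_mem_rowSpace X (hPX.2.2.1 β0)
      (mulVec_eq_zero_of_Sigmahat_mulVec_eq_zero X hv)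
  have hnorm := hS.mul_norm_le_norm_of_mulVec_add_smul_eq (hlmin.le_eigenvalues hS) hlam hθ hw
  have hwj : |w j| ≤ ‖WithLp.toLp 2 w‖ := by simpa using PiLp.norm_apply_le (WithLp.toLp 2 w) j
  have hlpos := hlmin.pos (posSemidef_Sigmahat X)
  rw [hmean, hbias, abs_neg, abs_mul, abs_of_pos hlam, l2norm_eq_norm, mul_assoc]
  gcongr
  rw [le_mul_inv_iff₀ hlpos]
  calc |w j| * lmin ≤ ‖WithLp.toLp 2 w‖ * lmin := by gcongr
    _ ≤ ‖WithLp.toLp 2 θ‖ := by linarith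

theorem ridge_bias_bound
    {Ω : Type*} [MeasurableSpace Ω] (μ : Measure Ω)
    (hμ : IsProbabilityMeasure μ)
    (n p : ℕ) (hn : 0 < n) (hp : 0 < p)
    (X : Matrix (Fin n) (Fin p) ℝ) (β0 : Fin p → ℝ)
    (σ : ℝ) (hσ : 0 < σ)
    (ε : Ω → Fin n → ℝ) (hεm : ∀ i, Measurable fun ω => ε ω i)
    (hε : IsGaussianVec μ ε 0 (σ ^ 2 • (1 : Matrix (Fin n) (Fin n) ℝ)))
    (lam : ℝ) (hlam : 0 < lam)
    (PX : Matrix (Fin p) (Fin p) ℝ) (hPX : IsRowProjection n X PX)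
    (lmin : ℝ) (hlmin : IsSmallestNonzeroEigenvalue (Sigmahat n X) lmin)
    (hminvar : 0 < OmegaMin n X lam) :
    ∀ j : Fin p,
      |(∫ ω, ridge n X lam (X.mulVec β0 + ε ω) j ∂μ) - PX.mulVec β0 j| ≤
        lam * l2norm (PX.mulVec β0) * lmin⁻¹ :=
  ridge_bias_bound_general μ n p X β0 σ ε hε lam hlam PX hPX lmin hlmin

end PaperRidge
end
end

section
/- If condition (minvar) holds, then for any 0 < C < ∞ there exist constants 0 < L_C ≤ M_C < ∞, depending only on C and the design matrix X, such that L_C ≤ Ω_min(λ) ≤ M_C for all λ ∈ (0, C]; in particular inf_{λ∈(0,C]} Ω_min(λ) > 0 and sup_{λ∈(0,C]} Ω_min(λ) < ∞. -/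
/-!
With `d k = s k ^ 2 / n`, the SVD gives `Σ̂ = V diag(d) Vᵀ`, and `A = Σ̂ + λ I` acts on the
columns of `V` as `diag(d + λ)`. Hence `A W A = Σ̂` for `W = V diag(d / (d + λ)²) Vᵀ`, so
`Ω(λ) = W` and `Ω(λ)_jj = ∑ₖ d k / (d k + λ)² V_jk²`. Every summand decreases in `λ` and is at
most `(d k)⁻¹ V_jk²`; thus `Ω_min` is antitone on `(0, ∞)`, which gives the lower bound
`Ω_min(C) > 0` on `(0, C]`, and is bounded above by `min_j ∑ₖ (d k)⁻¹ V_jk²`.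
-/

open MeasureTheory ProbabilityTheory Filter Matrix

noncomputable section

namespace PaperRidge

section ConjDiagonal

variable {ι κ : Type*} [Fintype ι] [Fintype κ] [DecidableEq κ]

lemma conj_diagonal_add_smul_one_mul [DecidableEq ι] {V : Matrix ι κ ℝ} (hV : Vᵀ * V = 1)
    (f : κ → ℝ) (c : ℝ) :
    (V * diagonal f * Vᵀ + c • 1) * V = V * diagonal (fun k => f k + c) := by
  rw [Matrix.add_mul, Matrix.mul_assoc, hV, Matrix.mul_one, Matrix.smul_mul, Matrix.one_mul]
  ext i k
  simp [mul_add, mul_comm]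

lemma transpose_mul_conj_diagonal_add_smul_one [DecidableEq ι] {V : Matrix ι κ ℝ}
    (hV : Vᵀ * V = 1) (f : κ → ℝ) (c : ℝ) :
    Vᵀ * (V * diagonal f * Vᵀ + c • 1) = diagonal (fun k => f k + c) * Vᵀ := by
  rw [Matrix.mul_add, ← Matrix.mul_assoc, ← Matrix.mul_assoc, hV, Matrix.one_mul,
    Matrix.mul_smul, Matrix.mul_one]
  ext k i
  simp [add_mul]

omit [Fintype ι] in
lemma conj_diagonal_apply_self (V : Matrix ι κ ℝ) (f : κ → ℝ) (j : ι) :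
    (V * diagonal f * Vᵀ) j j = ∑ k, f k * V j k ^ 2 := by
  rw [mul_apply]
  refine Finset.sum_congr rfl fun k _ => ?_
  rw [mul_diagonal, transpose_apply]
  ring

end ConjDiagonal

lemma div_add_sq_antitoneOn {d : ℝ} (hd : 0 ≤ d) :
    AntitoneOn (fun t => d / (d + t) ^ 2) (Set.Ioi 0) := by
  rintro t₁ (ht₁ : 0 < t₁) t₂ - ht
  have : 0 < d + t₁ := by linarith
  dsimp only
  gcongr

-- Also true at `d = 0`, where `d⁻¹ = 0`.
lemma div_add_sq_le_inv {d t : ℝ} (hd : 0 ≤ d) (ht : 0 ≤ t) : d / (d + t) ^ 2 ≤ d⁻¹ := by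
  rcases hd.eq_or_lt with rfl | hd
  · simp
  calc d / (d + t) ^ 2 ≤ d / d ^ 2 := by gcongr; linarith
    _ = d⁻¹ := by field_simp

section Ridge

variable {n p : ℕ}

lemma Sigmahat_posSemidef (X : Matrix (Fin n) (Fin p) ℝ) : (Sigmahat n X).PosSemidef :=
  (posSemidef_conjTranspose_mul_self X).smul (by positivity)

lemma isUnit_Sigmahat_add_smul_one (X : Matrix (Fin n) (Fin p) ℝ) {lam : ℝ} (hlam : 0 < lam) :
    IsUnit (Sigmahat n X + lam • 1) :=
  (PosDef.posSemidef_add (Sigmahat_posSemidef X) (PosDef.one.smul hlam)).isUnit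

variable {X : Matrix (Fin n) (Fin p) ℝ} {R : Matrix (Fin n) (Fin n) ℝ} {s : Fin n → ℝ}
  {V : Matrix (Fin p) (Fin n) ℝ}

lemma Sigmahat_eq_of_svd (hR : Rᵀ * R = 1) (hSVD : X = R * diagonal s * Vᵀ) :
    Sigmahat n X = V * diagonal (fun k => s k ^ 2 / n) * Vᵀ := by
  have hXX : Xᵀ * X = V * diagonal (fun k => s k * s k) * Vᵀ := by
    rw [hSVD, transpose_mul, transpose_mul, diagonal_transpose, transpose_transpose]
    calc V * (diagonal s * Rᵀ) * (R * diagonal s * Vᵀ)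
        = V * (diagonal s * (Rᵀ * R) * diagonal s) * Vᵀ := by simp only [Matrix.mul_assoc]
      _ = V * diagonal (fun k => s k * s k) * Vᵀ := by
        rw [hR, Matrix.mul_one, diagonal_mul_diagonal]
  rw [Sigmahat, hXX, ← Matrix.smul_mul, ← Matrix.mul_smul, ← diagonal_smul]
  congr with k
  simp [sq, div_eq_inv_mul]

lemma OmegaM_eq_of_svd (hR : Rᵀ * R = 1) (hV : Vᵀ * V = 1) (hSVD : X = R * diagonal s * Vᵀ)
    {lam : ℝ} (hlam : 0 < lam) :
    OmegaM n X lam = V * diagonal (fun k => s k ^ 2 / n / (s k ^ 2 / n + lam) ^ 2) * Vᵀ := by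
  set d : Fin n → ℝ := fun k => s k ^ 2 / n
  have hSigma : Sigmahat n X = V * diagonal d * Vᵀ := Sigmahat_eq_of_svd hR hSVD
  obtain ⟨A, hA⟩ : ∃ A, A = Sigmahat n X + lam • 1 := ⟨_, rfl⟩
  have hOmega : OmegaM n X lam = A⁻¹ * Sigmahat n X * A⁻¹ := by rw [hA]; rfl
  have hAV : A * V = V * diagonal (fun k => d k + lam) := by
    rw [hA, hSigma]; exact conj_diagonal_add_smul_one_mul hV d lam
  have hVA : Vᵀ * A = diagonal (fun k => d k + lam) * Vᵀ := by
    rw [hA, hSigma]; exact transpose_mul_conj_diagonal_add_smul_one hV d lam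
  have hAWA : A * (V * diagonal (fun k => d k / (d k + lam) ^ 2) * Vᵀ) * A = Sigmahat n X := by
    calc _ = V * (diagonal (fun k => d k + lam) * diagonal (fun k => d k / (d k + lam) ^ 2) *
              diagonal (fun k => d k + lam)) * Vᵀ := by
            simp only [← Matrix.mul_assoc]
            rw [hAV]
            simp only [Matrix.mul_assoc]
            rw [hVA]
      _ = V * diagonal d * Vᵀ := by
            rw [diagonal_mul_diagonal, diagonal_mul_diagonal]
            congr with k
            have : d k + lam ≠ 0 := by positivity
            field_simp
      _ = Sigmahat n X := hSigma.symm
  have hAdet : IsUnit A.det :=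
    (isUnit_iff_isUnit_det A).mp (hA ▸ isUnit_Sigmahat_add_smul_one X hlam)
  rw [hOmega, ← hAWA]
  simp only [Matrix.mul_assoc, mul_nonsing_inv _ hAdet, Matrix.mul_one]
  simp only [← Matrix.mul_assoc, nonsing_inv_mul _ hAdet, Matrix.one_mul]
  rfl

lemma OmegaM_apply_self_eq_of_svd (hR : Rᵀ * R = 1) (hV : Vᵀ * V = 1)
    (hSVD : X = R * diagonal s * Vᵀ) {lam : ℝ} (hlam : 0 < lam) (j : Fin p) :
    OmegaM n X lam j j = ∑ k, s k ^ 2 / n / (s k ^ 2 / n + lam) ^ 2 * V j k ^ 2 := by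
  rw [OmegaM_eq_of_svd hR hV hSVD hlam, conj_diagonal_apply_self]

lemma OmegaMin_antitoneOn_of_svd (hR : Rᵀ * R = 1) (hV : Vᵀ * V = 1)
    (hSVD : X = R * diagonal s * Vᵀ) : AntitoneOn (OmegaMin n X) (Set.Ioi 0) := by
  rintro lam₁ (hlam₁ : 0 < lam₁) lam₂ (hlam₂ : 0 < lam₂) hlam
  refine Finite.ciInf_mono fun j => ?_
  rw [OmegaM_apply_self_eq_of_svd hR hV hSVD hlam₁, OmegaM_apply_self_eq_of_svd hR hV hSVD hlam₂]
  refine Finset.sum_le_sum fun k _ => mul_le_mul_of_nonneg_right ?_ (sq_nonneg _)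
  exact div_add_sq_antitoneOn (by positivity) hlam₁ hlam₂ hlam

lemma OmegaMin_le_of_svd (hR : Rᵀ * R = 1) (hV : Vᵀ * V = 1)
    (hSVD : X = R * diagonal s * Vᵀ) {lam : ℝ} (hlam : 0 < lam) :
    OmegaMin n X lam ≤ ⨅ j, ∑ k, (s k ^ 2 / n)⁻¹ * V j k ^ 2 := by
  refine Finite.ciInf_mono fun j => ?_
  rw [OmegaM_apply_self_eq_of_svd hR hV hSVD hlam]
  refine Finset.sum_le_sum fun k _ => mul_le_mul_of_nonneg_right ?_ (sq_nonneg _)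
  exact div_add_sq_le_inv (by positivity) hlam.le

end Ridge

theorem OmegaMin_bounded_on_interval_general
    (n p : ℕ)
    (X : Matrix (Fin n) (Fin p) ℝ)
    (R : Matrix (Fin n) (Fin n) ℝ) (s : Fin n → ℝ) (V : Matrix (Fin p) (Fin n) ℝ)
    (hR : Rᵀ * R = 1) (hV : Vᵀ * V = 1)
    (hSVD : X = R * Matrix.diagonal s * Vᵀ)
    (hminvar : ∀ lam > (0 : ℝ), 0 < OmegaMin n X lam)
    (C : ℝ) (hC : 0 < C) :
    ∃ L M : ℝ, 0 < L ∧ L ≤ M ∧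
      ∀ lam : ℝ, 0 < lam → lam ≤ C →
        L ≤ OmegaMin n X lam ∧ OmegaMin n X lam ≤ M :=
  ⟨OmegaMin n X C, ⨅ j, ∑ k, (s k ^ 2 / n)⁻¹ * V j k ^ 2, hminvar C hC,
    OmegaMin_le_of_svd hR hV hSVD hC, fun _ hlam hlamC =>
    ⟨OmegaMin_antitoneOn_of_svd hR hV hSVD hlam hC hlamC, OmegaMin_le_of_svd hR hV hSVD hlam⟩⟩

theorem OmegaMin_bounded_on_interval
    (n p : ℕ) (hn : 0 < n) (hp : 0 < p)
    (X : Matrix (Fin n) (Fin p) ℝ)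
    (R : Matrix (Fin n) (Fin n) ℝ) (s : Fin n → ℝ) (V : Matrix (Fin p) (Fin n) ℝ)
    (hR : Rᵀ * R = 1) (hV : Vᵀ * V = 1)
    (hSVD : X = R * Matrix.diagonal s * Vᵀ)
    (hminvar : ∀ lam > (0 : ℝ), 0 < OmegaMin n X lam)
    (C : ℝ) (hC : 0 < C) :
    ∃ L M : ℝ, 0 < L ∧ L ≤ M ∧
      ∀ lam : ℝ, 0 < lam → lam ≤ C →
        L ≤ OmegaMin n X lam ∧ OmegaMin n X lam ≤ M :=
  OmegaMin_bounded_on_interval_general n p X R s V hR hV hSVD hminvar C hC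

end PaperRidge
end
end

section
/- Assume the linear model with Gaussian errors and condition (minvar), and let λ > 0. Then the bias-corrected Ridge estimator admits the representation β̂_corr;j = Z_j + γ_j for j = 1,…,p, where Z_j := β̂_j − E[β̂_j], the vector (Z₁,…,Z_p) is distributed as N_p(0, n⁻¹σ²Ω(λ)), and γ_j = (P_X)_{jj}β⁰_j − Σ_{k≠j}(P_X)_{jk}(β̂_init;k − β⁰_k) + b_j(λ) with b_j(λ) = E[β̂_j(λ)] − θ⁰_j. -/
open MeasureTheory ProbabilityTheory Filter Matrix

noncomputable section

namespace PaperRidge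

/-!
The Ridge estimator is linear in the response, `β̂(λ) = M Y` with `M = (Σ̂ + λI)⁻¹ n⁻¹ Xᵀ`, so for
`Y = Xβ⁰ + ε` it is Gaussian with covariance `σ² M Mᵀ = σ² n⁻¹ Ω(λ)`; subtracting its mean gives
`Z ~ N_p(0, n⁻¹ σ² Ω(λ))`. The decomposition `β̂_corr;j = Z_j + γ_j` is then an algebraic identity,
valid whatever the centering, once `(P_X β⁰)_j` is split into its diagonal and off-diagonal parts.
-/

lemma sum_sum_mul_mul_eq_dotProduct_mulVec {ι : Type*} [Fintype ι] (C : Matrix ι ι ℝ) (u : ι → ℝ) :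
    ∑ j, ∑ k, u j * C j k * u k = u ⬝ᵥ C *ᵥ u := by
  simp only [dotProduct, mulVec, Finset.mul_sum]
  exact Finset.sum_congr rfl fun j _ => Finset.sum_congr rfl fun k _ => by ring

section GaussianVec

variable {Ω : Type*} [MeasurableSpace Ω] {μ : Measure Ω} {p : ℕ}
  {Z : Ω → Fin p → ℝ} {m : Fin p → ℝ} {C : Matrix (Fin p) (Fin p) ℝ}

lemma isGaussianVec_iff :
    IsGaussianVec μ Z m C ↔
      ∀ u, μ.map (fun ω => u ⬝ᵥ Z ω) = gaussianReal (u ⬝ᵥ m) (u ⬝ᵥ C *ᵥ u).toNNReal := by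
  simp only [IsGaussianVec, sum_sum_mul_mul_eq_dotProduct_mulVec, dotProduct]

lemma IsGaussianVec.mulVec {q : ℕ} (h : IsGaussianVec μ Z m C) (A : Matrix (Fin q) (Fin p) ℝ) :
    IsGaussianVec μ (fun ω => A *ᵥ Z ω) (A *ᵥ m) (A * C * Aᵀ) := by
  rw [isGaussianVec_iff] at h ⊢
  intro u
  have hquad : u ⬝ᵥ (A * C * Aᵀ) *ᵥ u = (u ᵥ* A) ⬝ᵥ C *ᵥ (u ᵥ* A) := by
    rw [← mulVec_mulVec, ← mulVec_mulVec, mulVec_transpose, dotProduct_mulVec]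
  simp only [dotProduct_mulVec, hquad, h]

lemma IsGaussianVec.const_add (h : IsGaussianVec μ Z m C) (hZ : Measurable Z) (c : Fin p → ℝ) :
    IsGaussianVec μ (fun ω => c + Z ω) (c + m) C := by
  rw [isGaussianVec_iff] at h ⊢
  intro u
  have hmeas : Measurable fun ω => u ⬝ᵥ Z ω := by fun_prop
  have hcomp := Measure.map_map (μ := μ) (measurable_const_add (u ⬝ᵥ c)) hmeas
  simp only [dotProduct_add]
  rw [Function.comp_def] at hcomp
  rw [← hcomp, h, gaussianReal_map_const_add, add_comm (u ⬝ᵥ m)]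

lemma IsGaussianVec.integral_apply (h : IsGaussianVec μ Z m C) (hZ : Measurable Z) (j : Fin p) :
    ∫ ω, Z ω j ∂μ = m j := by
  have hlaw : HasLaw (fun ω => Pi.single j 1 ⬝ᵥ Z ω) (gaussianReal (Pi.single j 1 ⬝ᵥ m) _) μ :=
    ⟨by fun_prop, isGaussianVec_iff.mp h _⟩
  simpa using hlaw.integral_eq

lemma IsGaussianVec.sub_integral (h : IsGaussianVec μ Z m C) (hZ : Measurable Z) :
    IsGaussianVec μ (fun ω j => Z ω j - ∫ ω', Z ω' j ∂μ) 0 C := by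
  convert h.const_add hZ (-m) using 1
  · ext ω j
    rw [h.integral_apply hZ, Pi.add_apply, Pi.neg_apply, neg_add_eq_sub]
  · simp

end GaussianVec

section Ridge

variable (n : ℕ) {p : ℕ} (X : Matrix (Fin n) (Fin p) ℝ) (lam : ℝ)

def ridgeMatrix : Matrix (Fin p) (Fin n) ℝ :=
  (Sigmahat n X + lam • (1 : Matrix (Fin p) (Fin p) ℝ))⁻¹ * ((n : ℝ)⁻¹ • Xᵀ)

lemma ridge_eq_mulVec (Y : Fin n → ℝ) : ridge n X lam Y = ridgeMatrix n X lam *ᵥ Y := rfl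

lemma sigmahat_add_smul_one_transpose :
    (Sigmahat n X + lam • (1 : Matrix (Fin p) (Fin p) ℝ))ᵀ =
      Sigmahat n X + lam • (1 : Matrix (Fin p) (Fin p) ℝ) := by
  simp [Sigmahat]

lemma ridgeMatrix_mul_transpose :
    ridgeMatrix n X lam * (ridgeMatrix n X lam)ᵀ = (n : ℝ)⁻¹ • OmegaM n X lam := by
  rw [ridgeMatrix, transpose_mul, transpose_nonsing_inv, sigmahat_add_smul_one_transpose,
    transpose_smul, transpose_transpose]
  simp only [OmegaM, Sigmahat, Matrix.smul_mul, Matrix.mul_smul, smul_smul, Matrix.mul_assoc]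

lemma isGaussianVec_ridge {Ω : Type*} [MeasurableSpace Ω] {μ : Measure Ω} {ε : Ω → Fin n → ℝ}
    {σ : ℝ} (hε : IsGaussianVec μ ε 0 (σ ^ 2 • (1 : Matrix (Fin n) (Fin n) ℝ)))
    (hεm : Measurable ε) (c : Fin n → ℝ) :
    IsGaussianVec μ (fun ω => ridge n X lam (c + ε ω))
      (ridgeMatrix n X lam *ᵥ c) ((σ ^ 2 * (n : ℝ)⁻¹) • OmegaM n X lam) := by
  have h := (hε.const_add hεm c).mulVec (ridgeMatrix n X lam)
  rwa [add_zero, Matrix.mul_smul, Matrix.mul_one, Matrix.smul_mul, ridgeMatrix_mul_transpose,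
    smul_smul] at h

lemma corrRidge_eq_sub_add (P : Matrix (Fin p) (Fin p) ℝ) (Y : Fin n → ℝ) (b β : Fin p → ℝ)
    (e : ℝ) (j : Fin p) :
    corrRidge n X lam P Y b j =
      (ridge n X lam Y j - e) +
        (P j j * β j - ∑ k ∈ Finset.univ.erase j, P j k * (b k - β k) + (e - (P *ᵥ β) j)) := by
  have hdiag : (P *ᵥ β) j = P j j * β j + ∑ k ∈ Finset.univ.erase j, P j k * β k :=
    (Finset.add_sum_erase _ _ (Finset.mem_univ j)).symm
  simp only [corrRidge, hdiag, mul_sub, Finset.sum_sub_distrib]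
  ring

end Ridge

theorem corrRidge_representation_general
    {Ω : Type*} [MeasurableSpace Ω] (μ : Measure Ω)
    (n p : ℕ)
    (X : Matrix (Fin n) (Fin p) ℝ) (β0 : Fin p → ℝ)
    (σ : ℝ)
    (ε : Ω → Fin n → ℝ) (hεm : ∀ i, Measurable fun ω => ε ω i)
    (hε : IsGaussianVec μ ε 0 (σ ^ 2 • (1 : Matrix (Fin n) (Fin n) ℝ)))
    (lam : ℝ)
    (PX : Matrix (Fin p) (Fin p) ℝ)
    (binit : Ω → Fin p → ℝ) :
    IsGaussianVec μ
      (fun ω j => ridge n X lam (X.mulVec β0 + ε ω) j -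
        ∫ ω', ridge n X lam (X.mulVec β0 + ε ω') j ∂μ)
      0 ((σ ^ 2 * (n : ℝ)⁻¹) • OmegaM n X lam) ∧
    ∀ ω (j : Fin p),
      corrRidge n X lam PX (X.mulVec β0 + ε ω) (binit ω) j =
        (ridge n X lam (X.mulVec β0 + ε ω) j -
          ∫ ω', ridge n X lam (X.mulVec β0 + ε ω') j ∂μ) +
        (PX j j * β0 j -
          (∑ k ∈ Finset.univ.erase j, PX j k * (binit ω k - β0 k)) +
          ((∫ ω', ridge n X lam (X.mulVec β0 + ε ω') j ∂μ) - PX.mulVec β0 j)) := by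
  have hε_meas : Measurable ε := measurable_pi_iff.mpr hεm
  have hridge_meas : Measurable fun ω => ridge n X lam (X *ᵥ β0 + ε ω) := by
    simp only [ridge_eq_mulVec]
    fun_prop
  exact ⟨(isGaussianVec_ridge n X lam hε hε_meas _).sub_integral hridge_meas,
    fun ω j => corrRidge_eq_sub_add n X lam PX _ _ β0 _ j⟩

theorem corrRidge_representation
    {Ω : Type*} [MeasurableSpace Ω] (μ : Measure Ω)
    (hμ : IsProbabilityMeasure μ)
    (n p : ℕ) (hn : 0 < n) (hp : 0 < p)
    (X : Matrix (Fin n) (Fin p) ℝ) (β0 : Fin p → ℝ)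
    (σ : ℝ) (hσ : 0 < σ)
    (ε : Ω → Fin n → ℝ) (hεm : ∀ i, Measurable fun ω => ε ω i)
    (hε : IsGaussianVec μ ε 0 (σ ^ 2 • (1 : Matrix (Fin n) (Fin n) ℝ)))
    (lam : ℝ) (hlam : 0 < lam)
    (PX : Matrix (Fin p) (Fin p) ℝ) (hPX : IsRowProjection n X PX)
    (lmin : ℝ) (hlmin : IsSmallestNonzeroEigenvalue (Sigmahat n X) lmin)
    (hminvar : 0 < OmegaMin n X lam)
    (binit : Ω → Fin p → ℝ) (hbm : ∀ j, Measurable fun ω => binit ω j) :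
    IsGaussianVec μ
      (fun ω j => ridge n X lam (X.mulVec β0 + ε ω) j -
        ∫ ω', ridge n X lam (X.mulVec β0 + ε ω') j ∂μ)
      0 ((σ ^ 2 * (n : ℝ)⁻¹) • OmegaM n X lam) ∧
    ∀ ω (j : Fin p),
      corrRidge n X lam PX (X.mulVec β0 + ε ω) (binit ω) j =
        (ridge n X lam (X.mulVec β0 + ε ω) j -
          ∫ ω', ridge n X lam (X.mulVec β0 + ε ω') j ∂μ) +
        (PX j j * β0 j -
          (∑ k ∈ Finset.univ.erase j, PX j k * (binit ω k - β0 k)) +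
          ((∫ ω', ridge n X lam (X.mulVec β0 + ε ω') j ∂μ) - PX.mulVec β0 j)) :=
  corrRidge_representation_general μ n p X β0 σ ε hεm hε lam PX binit

end PaperRidge
end
end
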